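/- Over the four-letter alphabet {1, 2, u, d}, the language generated by the regular expression (1*(2|u)*d)*1⁺ (where * is the Kleene star and 1⁺ means one or more copies of the letter 1) is exactly the set of nonempty words that end in the letter 1 and contain no factor (contiguous substring) 21 and no factor u1. -/

import Mathlib

/-- The four-letter alphabet `{1, 2, u, d}`. -/
inductive Ar : Type
  | one : Ar
  | two : Ar
  | u : Ar
  | d : Ar
deriving DecidableEq

open RegularExpression in
/-- The regular expression `(1*(2|u)*d)*1⁺` over the alphabet `{1, 2, u, d}`. -/
def rectRegex : RegularExpression Ar :=
  ((char Ar.one).star * (char Ar.two + char Ar.u).star * char Ar.d).star *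
    (char Ar.one * (char Ar.one).star)

/-
A word avoids the factors `21` and `u1` exactly when every letter `1` in it is preceded by `1`,
by `d`, or by nothing. Cutting such a word after each `d`, every piece has all its `1`s before
its `2`s and `u`s, so the word lies in `(1*(2|u)*d)*·1*(2|u)*`, and conversely every word of that
language has this property, because a `d` may be followed by anything. For a word ending in `1`
the final piece can contain no `2` or `u`, so it lies in `1⁺`.
-/

open scoped Computability

namespace List

theorem isChain_iff_forall_infix {α : Type*} {R : α → α → Prop} {l : List α} :
    IsChain R l ↔ ∀ a b, [a, b] <:+: l → R a b :=
  ⟨fun h _ _ hab => isChain_pair.mp (h.infix hab), (isChain_isInfix l).imp⟩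

end List

namespace Language

theorem mem_singleton_iff {α : Type*} {x y : List α} : x ∈ ({y} : Language α) ↔ x = y :=
  Iff.rfl

theorem mem_kstar_iff_forall_singleton_mem {α : Type*} {l : Language α}
    (hl : ∀ y ∈ l, y.length = 1) {x : List α} : x ∈ l∗ ↔ ∀ c ∈ x, [c] ∈ l := by
  refine ⟨fun hx c hc => ?_, fun hx => mem_kstar.mpr
    ⟨x.map ([·]), (List.flatMap_singleton' x).symm, by simpa using hx⟩⟩
  obtain ⟨L, rfl, hL⟩ := mem_kstar.mp hx
  obtain ⟨y, hy, hcy⟩ := List.mem_flatten.mp hc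
  obtain ⟨c', rfl⟩ := List.length_eq_one_iff.mp (hl y (hL y hy))
  rw [List.mem_singleton.mp hcy]
  exact hL _ hy

end Language

namespace Ar

open List Language

def AllowedPair : Ar → Ar → Prop
  | two, one => False
  | u, one => False
  | _, _ => True

theorem isChain_allowedPair_iff {w : List Ar} :
    IsChain AllowedPair w ↔ ¬ [two, one] <:+: w ∧ ¬ [u, one] <:+: w := by
  rw [isChain_iff_forall_infix]
  refine ⟨fun h => ⟨h two one, h u one⟩, fun ⟨h₂, hu⟩ a b hab => ?_⟩
  cases a <;> cases b <;> trivial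

theorem mem_kstar_one {x : List Ar} :
    x ∈ ({[one]} : Language Ar)∗ ↔ ∀ c ∈ x, c = one := by
  rw [mem_kstar_iff_forall_singleton_mem] <;> simp [mem_singleton_iff]

theorem mem_kstar_two_add_u {x : List Ar} :
    x ∈ ({[two]} + {[u]} : Language Ar)∗ ↔ ∀ c ∈ x, c = two ∨ c = u := by
  rw [mem_kstar_iff_forall_singleton_mem] <;> simp only [mem_add, mem_singleton_iff] <;> grind

def segment : Language Ar := {[one]}∗ * ({[two]} + {[u]})∗

def block : Language Ar := segment * {[d]}

theorem matches'_rectRegex : rectRegex.matches' = block∗ * ({[one]} * {[one]}∗) := rfl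

theorem mem_segment {w : List Ar} : w ∈ segment ↔
    ∃ p q, (∀ c ∈ p, c = one) ∧ (∀ c ∈ q, c = two ∨ c = u) ∧ p ++ q = w := by
  simp only [segment, mem_mul, mem_kstar_one, mem_kstar_two_add_u]
  grind

theorem allowedPair_one_left (b : Ar) : AllowedPair one b := by
  cases b <;> trivial

theorem allowedPair_d_left (b : Ar) : AllowedPair d b := by
  cases b <;> trivial

theorem allowedPair_of_ne_one (a : Ar) {b : Ar} (hb : b ≠ one) : AllowedPair a b := by
  cases a <;> cases b <;> trivial

theorem isChain_append_d_cons {x y : List Ar} :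
    IsChain AllowedPair (x ++ d :: y) ↔ IsChain AllowedPair x ∧ IsChain AllowedPair y := by
  simp [isChain_append, isChain_cons, allowedPair_d_left, allowedPair_of_ne_one]

theorem isChain_of_mem_segment {w : List Ar} (hw : w ∈ segment) : IsChain AllowedPair w := by
  obtain ⟨p, q, hp, hq, rfl⟩ := mem_segment.mp hw
  have hq' : ∀ c ∈ q, c ≠ one := fun c hc => by rcases hq c hc with rfl | rfl <;> decide
  refine isChain_append.mpr ⟨?_, ?_, fun a ha b _ => ?_⟩
  · refine isChain_iff_forall_infix.mpr fun a b hab => ?_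
    rw [hp a (hab.subset (by simp))]
    exact allowedPair_one_left b
  · exact isChain_iff_forall_infix.mpr fun a b hab =>
      allowedPair_of_ne_one a (hq' b (hab.subset (by simp)))
  · rw [hp a (mem_of_mem_getLast? ha)]
    exact allowedPair_one_left b

theorem mem_segment_of_isChain {w : List Ar} (hw : IsChain AllowedPair w) (hd : d ∉ w) :
    w ∈ segment := by
  induction w with
  | nil => exact mem_segment.mpr ⟨[], [], by simp, by simp, rfl⟩
  | cons a t ih =>
    obtain ⟨p, q, hp, hq, rfl⟩ :=
      mem_segment.mp (ih hw.tail fun h => hd (mem_cons_of_mem _ h))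
    refine mem_segment.mpr ?_
    cases a with
    | one => exact ⟨one :: p, q, by simpa using hp, hq, rfl⟩
    | d => exact absurd mem_cons_self hd
    | two | u =>
      obtain rfl : p = [] := by
        cases p with
        | nil => rfl
        | cons c p =>
          obtain rfl : c = one := hp c mem_cons_self
          exact (isChain_cons_cons.mp hw).1.elim
      exact ⟨[], _ :: q, by simp, by simpa using hq, rfl⟩

theorem isChain_allowedPair_of_mem {w : List Ar} (hw : w ∈ block∗ * segment) :
    IsChain AllowedPair w := by
  obtain ⟨x, hx, y, hy, rfl⟩ := mem_mul.mp hw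
  obtain ⟨L, rfl, hL⟩ := mem_kstar.mp hx
  clear hw hx
  induction L with
  | nil => exact isChain_of_mem_segment hy
  | cons b L ih =>
    obtain ⟨s, hs, _, rfl, rfl⟩ := mem_mul.mp (hL b mem_cons_self)
    rw [flatten_cons, append_assoc, append_assoc, singleton_append, isChain_append_d_cons]
    exact ⟨isChain_of_mem_segment hs, ih (fun b hb => hL b (mem_cons_of_mem _ hb))⟩

theorem mem_kstar_block_mul_segment_of_isChain {w : List Ar} (hw : IsChain AllowedPair w) :
    w ∈ block∗ * segment := by
  by_cases hd : d ∈ w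
  · obtain ⟨s, t, rfl⟩ := append_of_mem hd
    obtain ⟨hs, ht⟩ := isChain_append_d_cons.mp hw
    have hsd : s ++ [d] ∈ block∗ := by
      refine (kstar_mul_le_kstar : block∗ * block ≤ block∗) ?_
      rw [block, ← mul_assoc]
      exact append_mem_mul (mem_kstar_block_mul_segment_of_isChain hs) rfl
    rw [← kstar_mul_kstar, mul_assoc, append_cons]
    exact append_mem_mul hsd (mem_kstar_block_mul_segment_of_isChain ht)
  · exact append_mem_mul (nil_mem_kstar _) (mem_segment_of_isChain hw hd)
termination_by w.length
decreasing_by all_goals subst_vars; simp only [length_append, length_cons]; omega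

theorem isChain_append_one_iff {v : List Ar} :
    IsChain AllowedPair (v ++ [one]) ↔ v ∈ block∗ * {[one]}∗ := by
  constructor
  · intro h
    obtain ⟨x, hx, y, hy, rfl⟩ :=
      mem_mul.mp (mem_kstar_block_mul_segment_of_isChain (h.infix (infix_append [] v [one])))
    obtain ⟨p, q, hp, hq, rfl⟩ := mem_segment.mp hy
    obtain rfl : q = [] := by
      obtain rfl | ⟨q, c, rfl⟩ := eq_nil_or_concat q
      · rfl
      · have hc := isChain_iff_forall_infix.mp h c one ⟨x ++ p ++ q, [], by simp⟩
        rcases hq c (by simp) with rfl | rfl <;> exact hc.elim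
    exact append_mem_mul hx (mem_kstar_one.mpr (by simpa using hp))
  · intro h
    obtain ⟨x, hx, p, hp, rfl⟩ := mem_mul.mp h
    rw [append_assoc]
    have hp' : p ++ [one] ∈ segment := by
      refine mem_segment.mpr ⟨p ++ [one], [], ?_, by simp, by simp⟩
      simpa [or_imp, forall_and] using mem_kstar_one.mp hp
    exact isChain_allowedPair_of_mem (append_mem_mul hx hp')

theorem mem_rectRegex_iff {w : List Ar} :
    w ∈ rectRegex.matches' ↔ w.getLast? = some one ∧ IsChain AllowedPair w := by
  rw [matches'_rectRegex, ← mul_self_kstar_comm, ← mul_assoc, getLast?_eq_some_iff]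
  constructor
  · intro hw
    obtain ⟨v, hv, _, rfl, rfl⟩ := mem_mul.mp hw
    exact ⟨⟨v, rfl⟩, isChain_append_one_iff.mpr hv⟩
  · rintro ⟨⟨v, rfl⟩, h⟩
    exact append_mem_mul (isChain_append_one_iff.mp h) rfl

end Ar

/-- The language of `(1*(2|u)*d)*1⁺` is exactly the set of nonempty words that end
in the letter `1` and contain no factor `21` and no factor `u1`. -/
theorem rectRegex_language (w : List Ar) :
    w ∈ rectRegex.matches' ↔
      w ≠ [] ∧ w.getLast? = some Ar.one ∧
        ¬ [Ar.two, Ar.one] <:+: w ∧ ¬ [Ar.u, Ar.one] <:+: w := by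
  rw [Ar.mem_rectRegex_iff, Ar.isChain_allowedPair_iff]
  refine ⟨fun h => ⟨?_, h⟩, fun h => h.2⟩
  rintro rfl
  simp at h
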